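/- Let G be a finite group acting transitively on a finite set Ω with point stabilizer H and minimal nontrivial component degree d_H. If S ⊆ G, Δ₁, Δ₂ ⊆ Ω with |S|·|Δ₁|·|Δ₂| ≥ |Ω|²|G|/d_H, then there exist g ∈ S, ω₁ ∈ Δ₁, ω₂ ∈ Δ₂ with g(ω₁) = ω₂. -/

import Mathlib

open scoped BigOperators

/-- A subspace of `ℝ^Ω` invariant under the permutation action of `G`. -/
def PermInvariant (G : Type*) [Group G] {Ω : Type*} [MulAction G Ω]
    (p : Submodule ℝ (Ω → ℝ)) : Prop :=
  ∀ (g : G) (f : Ω → ℝ), f ∈ p → (fun ω => f (g⁻¹ • ω)) ∈ p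

/-- A nontrivial irreducible component of the permutation representation of `G` on `ℝ^Ω`. -/
def IsNontrivIrredComponent (G : Type*) [Group G] {Ω : Type*} [MulAction G Ω]
    (p : Submodule ℝ (Ω → ℝ)) : Prop :=
  PermInvariant G p ∧ p ≠ ⊥ ∧
    (∀ q : Submodule ℝ (Ω → ℝ), q ≤ p → PermInvariant G q → q = ⊥ ∨ q = p) ∧
    (∃ (g : G) (f : Ω → ℝ), f ∈ p ∧ (fun ω => f (g⁻¹ • ω)) ≠ f)

/-!
Center the indicators: `f₁ = 1_{Δ₁} - (|Δ₁|/|Ω|)·1` and `f₂ = 1_{Δ₂} - (|Δ₂|/|Ω|)·1`.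
The frame operator `T v = ∑_g ⟪g f₁, v⟫ g f₁` of the orbit of `f₁` is positive, commutes with
`G` and kills the constants, so each eigenspace of a positive eigenvalue is a `G`-invariant
subspace without fixed vectors and therefore contains a nontrivial irreducible component: its
dimension is at least `d_H`. As `tr T = |G| ‖f₁‖²`, every eigenvalue is at most `|G| ‖f₁‖² / d_H`,
whence `d_H ∑_g ⟪g f₁, f₂⟫² ≤ |G| ‖f₁‖² ‖f₂‖²`. If no `g ∈ S` maps a point of `Δ₁` into `Δ₂`,
then `⟪g f₁, f₂⟫ = -|Δ₁||Δ₂|/|Ω|` for every `g ∈ S`, and this inequality contradicts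
`|S||Δ₁||Δ₂| ≥ |Ω|²|G|/d_H`.
-/

open scoped RealInnerProductSpace Pointwise
open Module End Finset

namespace LinearMap.IsPositive

variable {E : Type*} [NormedAddCommGroup E] [InnerProductSpace ℝ E] [FiniteDimensional ℝ E]
  {T : E →ₗ[ℝ] E} {d : ℕ}

theorem mul_eigenvalues_le_trace (hT : T.IsPositive)
    (hd : ∀ μ, 0 < μ → HasEigenvalue T μ → d ≤ finrank ℝ (eigenspace T μ)) {n : ℕ}
    (hn : finrank ℝ E = n) (i : Fin n) :
    d * hT.isSymmetric.eigenvalues hn i ≤ trace ℝ E T := by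
  set μ := hT.isSymmetric.eigenvalues hn
  have hμ : ∀ j, 0 ≤ μ j := hT.nonneg_eigenvalues hn
  have htrace : trace ℝ E T = ∑ j, μ j := hT.isSymmetric.trace_eq_sum_eigenvalues hn
  have hcard : #{j | μ j = μ i} = finrank ℝ (eigenspace T (μ i)) :=
    hT.isSymmetric.card_filter_eigenvalues_eq hn (μ i)
  rw [htrace]
  rcases (hμ i).eq_or_lt with h0 | hpos
  · rw [← h0, mul_zero]
    exact sum_nonneg fun j _ => hμ j
  calc (d : ℝ) * μ i ≤ #{j | μ j = μ i} * μ i := by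
        rw [hcard]
        gcongr
        exact_mod_cast hd _ hpos (hT.isSymmetric.hasEigenvalue_eigenvalues hn i)
    _ = ∑ j with μ j = μ i, μ j := by
        rw [sum_congr rfl fun j hj => (mem_filter.mp hj).2, sum_const, nsmul_eq_mul]
    _ ≤ ∑ j, μ j :=
        sum_le_sum_of_subset_of_nonneg (filter_subset _ _) fun j _ _ => hμ j

theorem mul_inner_apply_self_le (hT : T.IsPositive)
    (hd : ∀ μ, 0 < μ → HasEigenvalue T μ → d ≤ finrank ℝ (eigenspace T μ)) (v : E) :
    d * ⟪T v, v⟫ ≤ trace ℝ E T * ‖v‖ ^ 2 := by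
  set μ := hT.isSymmetric.eigenvalues rfl
  set b := hT.isSymmetric.eigenvectorBasis rfl
  have hTv : ⟪T v, v⟫ = ∑ i, μ i * ⟪b i, v⟫ ^ 2 := by
    rw [← b.sum_inner_mul_inner]
    refine sum_congr rfl fun i _ => ?_
    rw [real_inner_comm, ← hT.isSymmetric, hT.isSymmetric.apply_eigenvectorBasis,
      real_inner_smul_left, RCLike.ofReal_real_eq_id, id_eq, real_inner_comm v]
    ring
  calc (d : ℝ) * ⟪T v, v⟫ = ∑ i, d * μ i * ⟪b i, v⟫ ^ 2 := by
        simp only [hTv, mul_sum, mul_assoc]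
    _ ≤ ∑ i, trace ℝ E T * ⟪b i, v⟫ ^ 2 := by
        gcongr with i
        exact hT.mul_eigenvalues_le_trace hd rfl i
    _ = trace ℝ E T * ‖v‖ ^ 2 := by
        rw [← mul_sum, ← real_inner_self_eq_norm_sq, ← b.sum_inner_mul_inner]
        simp_rw [sq, real_inner_comm v]

end LinearMap.IsPositive

section FrameOperator

variable {ι E : Type*} [Fintype ι] [NormedAddCommGroup E] [InnerProductSpace ℝ E]

noncomputable def frameOperator (x : ι → E) : E →ₗ[ℝ] E :=
  ∑ i, (InnerProductSpace.rankOne ℝ (x i) (x i) : E →L[ℝ] E).toLinearMap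

theorem frameOperator_apply (x : ι → E) (v : E) : frameOperator x v = ∑ i, ⟪x i, v⟫ • x i := by
  simp [frameOperator]

theorem isPositive_frameOperator (x : ι → E) : (frameOperator x).IsPositive :=
  LinearMap.isPositive_sum _ fun i _ =>
    (InnerProductSpace.isPositive_rankOne_self (x i)).toLinearMap

theorem inner_frameOperator_apply_self (x : ι → E) (v : E) :
    ⟪frameOperator x v, v⟫ = ∑ i, ⟪x i, v⟫ ^ 2 := by
  simp only [frameOperator_apply, sum_inner, real_inner_smul_left, sq]

theorem trace_frameOperator [FiniteDimensional ℝ E] (x : ι → E) :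
    LinearMap.trace ℝ E (frameOperator x) = ∑ i, ‖x i‖ ^ 2 := by
  simp [frameOperator, InnerProductSpace.trace_rankOne]

theorem frameOperator_apply_isometry (x : ι → E) (A : E ≃ₗᵢ[ℝ] E) (σ : ι ≃ ι)
    (hx : ∀ i, x (σ i) = A (x i)) (v : E) :
    frameOperator x (A v) = A (frameOperator x v) := by
  rw [frameOperator_apply, frameOperator_apply, map_sum, ← σ.sum_comp]
  simp only [hx, LinearIsometryEquiv.inner_map_map, map_smul]

end FrameOperator

section PermutationRepresentation

variable {G Ω : Type*} [Group G] [MulAction G Ω] [Fintype Ω]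

noncomputable def permIsometry (g : G) : EuclideanSpace ℝ Ω ≃ₗᵢ[ℝ] EuclideanSpace ℝ Ω :=
  LinearIsometryEquiv.piLpCongrLeft 2 ℝ ℝ (MulAction.toPerm g)

theorem permIsometry_apply (g : G) (v : EuclideanSpace ℝ Ω) (ω : Ω) :
    permIsometry g v ω = v (g⁻¹ • ω) := rfl

theorem permIsometry_mul (g h : G) (v : EuclideanSpace ℝ Ω) :
    permIsometry (g * h) v = permIsometry g (permIsometry h v) := by
  ext ω
  simp only [permIsometry_apply, mul_inv_rev, mul_smul]

variable [DecidableEq Ω]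

def indicatorVec (A : Finset Ω) : EuclideanSpace ℝ Ω :=
  WithLp.toLp 2 fun ω => if ω ∈ A then 1 else 0

theorem permIsometry_indicatorVec (g : G) (A : Finset Ω) :
    permIsometry g (indicatorVec A) = indicatorVec (g • A) := by
  ext ω
  simp [permIsometry_apply, indicatorVec, inv_smul_mem_iff]

theorem inner_indicatorVec (A B : Finset Ω) :
    ⟪indicatorVec A, indicatorVec B⟫ = #(A ∩ B) := by
  simp [indicatorVec, PiLp.inner_apply]

noncomputable def centeredIndicator (A : Finset Ω) : EuclideanSpace ℝ Ω :=
  indicatorVec A - (#A / Fintype.card Ω : ℝ) • indicatorVec univ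

theorem permIsometry_centeredIndicator (g : G) (A : Finset Ω) :
    permIsometry g (centeredIndicator A) = centeredIndicator (g • A) := by
  simp only [centeredIndicator, map_sub, map_smul, permIsometry_indicatorVec, card_smul_finset,
    smul_finset_univ]

theorem inner_centeredIndicator (A B : Finset Ω) :
    ⟪centeredIndicator A, centeredIndicator B⟫ = #(A ∩ B) - #A * #B / Fintype.card Ω := by
  rcases isEmpty_or_nonempty Ω with hΩ | hΩ
  · rw [Subsingleton.elim (centeredIndicator A) 0]
    simp [eq_empty_of_isEmpty]
  have hn : (Fintype.card Ω : ℝ) ≠ 0 := by positivity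
  simp only [centeredIndicator, inner_sub_left, inner_sub_right, real_inner_smul_left,
    real_inner_smul_right, inner_indicatorVec, inter_univ, univ_inter, card_univ]
  field_simp
  ring

theorem inner_centeredIndicator_indicatorVec_univ (A : Finset Ω) :
    ⟪centeredIndicator A, indicatorVec univ⟫ = 0 := by
  simp only [centeredIndicator, inner_sub_left, real_inner_smul_left, inner_indicatorVec,
    inter_univ, card_univ]
  rw [div_mul_cancel_of_imp, sub_self]
  intro hn
  simpa using (A.card_le_univ.trans_eq (Nat.cast_eq_zero.mp hn))

theorem exists_eq_smul_indicatorVec_univ [MulAction.IsPretransitive G Ω]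
    {v : EuclideanSpace ℝ Ω} (hv : ∀ g : G, permIsometry g v = v) :
    ∃ c : ℝ, v = c • indicatorVec univ := by
  rcases isEmpty_or_nonempty Ω with hΩ | hΩ
  · exact ⟨0, Subsingleton.elim _ _⟩
  obtain ⟨ω₀⟩ := hΩ
  refine ⟨v ω₀, ?_⟩
  ext ω
  obtain ⟨g, rfl⟩ := MulAction.exists_smul_eq G ω₀ ω
  have : v (g • ω₀) = v ω₀ := by
    simpa [permIsometry_apply] using (congr_arg (fun w => w (g • ω₀)) (hv g)).symm
  simp [this, indicatorVec]

end PermutationRepresentation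

section Components

variable {G Ω : Type*} [Group G] [MulAction G Ω]

theorem exists_isNontrivIrredComponent_le [Finite Ω] {p : Submodule ℝ (Ω → ℝ)}
    (hp : PermInvariant G p) (hne : p ≠ ⊥)
    (hfix : ∀ f ∈ p, (∀ g : G, (fun ω => f (g⁻¹ • ω)) = f) → f = 0) :
    ∃ q ≤ p, IsNontrivIrredComponent G q := by
  obtain ⟨q, ⟨hqp, hq, hq0⟩, hmin⟩ := wellFounded_lt.has_min
    {q : Submodule ℝ (Ω → ℝ) | q ≤ p ∧ PermInvariant G q ∧ q ≠ ⊥} ⟨p, le_rfl, hp, hne⟩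
  refine ⟨q, hqp, hq, hq0, fun r hrq hr => ?_, ?_⟩
  · by_contra! h
    exact hmin r ⟨hrq.trans hqp, hr, h.1⟩ (lt_of_le_of_ne hrq h.2)
  · obtain ⟨f, hfq, hf0⟩ := Submodule.exists_mem_ne_zero_of_ne_bot hq0
    by_contra! hfixed
    exact hf0 (hfix f (hqp hfq) fun g => hfixed g f hfq)

theorem IsNontrivIrredComponent.finrank_pos [Finite Ω] {p : Submodule ℝ (Ω → ℝ)}
    (hp : IsNontrivIrredComponent G p) : 0 < finrank ℝ p :=
  Nat.pos_of_ne_zero fun h => hp.2.1 (Submodule.finrank_eq_zero.mp h)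

theorem IsNontrivIrredComponent.nonempty {p : Submodule ℝ (Ω → ℝ)}
    (hp : IsNontrivIrredComponent G p) : Nonempty Ω := by
  obtain ⟨_, _, _, hf⟩ := hp.2.2.2
  exact ⟨(Function.ne_iff.mp hf).choose⟩

theorem le_finrank_of_forall_permIsometry_mem [Fintype Ω] {d : ℕ}
    (hd : ∀ p : Submodule ℝ (Ω → ℝ), IsNontrivIrredComponent G p → d ≤ finrank ℝ p)
    {V : Submodule ℝ (EuclideanSpace ℝ Ω)} (hV : ∀ g : G, ∀ v ∈ V, permIsometry g v ∈ V)
    (hne : V ≠ ⊥) (hfix : ∀ v ∈ V, (∀ g : G, permIsometry g v = v) → v = 0) :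
    d ≤ finrank ℝ V := by
  let e : EuclideanSpace ℝ Ω ≃ₗ[ℝ] (Ω → ℝ) := WithLp.linearEquiv 2 ℝ (Ω → ℝ)
  obtain ⟨q, hq, hcomp⟩ := exists_isNontrivIrredComponent_le (G := G) (p := V.map e.toLinearMap)
    (fun g f hf => by rw [Submodule.mem_map_equiv] at hf ⊢; exact hV g _ hf)
    (by simpa using hne)
    (fun f hf hfixf => by
      rw [Submodule.mem_map_equiv] at hf
      have := hfix _ hf fun g => by ext ω; exact congr_fun (hfixf g) ω
      simpa using congr_arg e this)
  calc d ≤ finrank ℝ q := hd q hcomp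
    _ ≤ finrank ℝ (V.map e.toLinearMap) := Submodule.finrank_mono hq
    _ = finrank ℝ V := LinearEquiv.finrank_map_eq e V

end Components

section Mixing

variable {G Ω : Type*} [Group G] [Fintype G] [MulAction G Ω] [MulAction.IsPretransitive G Ω]
  [Fintype Ω] [DecidableEq Ω] {d : ℕ}

theorem le_finrank_eigenspace_frameOperator_permIsometry
    (hd : ∀ p : Submodule ℝ (Ω → ℝ), IsNontrivIrredComponent G p → d ≤ finrank ℝ p)
    {u : EuclideanSpace ℝ Ω} (hu : ⟪u, indicatorVec univ⟫ = 0) {μ : ℝ} (hμ : μ ≠ 0)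
    (hμT : HasEigenvalue (frameOperator fun g : G => permIsometry g u) μ) :
    d ≤ finrank ℝ (eigenspace (frameOperator fun g : G => permIsometry g u) μ) := by
  refine le_finrank_of_forall_permIsometry_mem hd (fun h v hv => ?_) (hasEigenvalue_iff.mp hμT)
    fun v hv hfix => ?_
  · rw [mem_eigenspace_iff] at hv ⊢
    rw [frameOperator_apply_isometry (fun g : G => permIsometry g u) (permIsometry h)
      (Equiv.mulLeft h) (fun g => permIsometry_mul h g u), hv, map_smul]
  · obtain ⟨c, rfl⟩ := exists_eq_smul_indicatorVec_univ hfix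
    have hker : frameOperator (fun g : G => permIsometry g u) (c • indicatorVec univ) = 0 := by
      refine (frameOperator_apply _ _).trans (sum_eq_zero fun g _ => ?_)
      rw [← smul_finset_univ (a := g), ← permIsometry_indicatorVec, real_inner_smul_right,
        LinearIsometryEquiv.inner_map_map, hu, mul_zero, zero_smul]
    rw [mem_eigenspace_iff, hker] at hv
    exact (smul_eq_zero.mp hv.symm).resolve_left hμ

theorem mul_sum_inner_permIsometry_sq_le
    (hd : ∀ p : Submodule ℝ (Ω → ℝ), IsNontrivIrredComponent G p → d ≤ finrank ℝ p)
    {u : EuclideanSpace ℝ Ω} (hu : ⟪u, indicatorVec univ⟫ = 0) (v : EuclideanSpace ℝ Ω) :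
    d * ∑ g : G, ⟪permIsometry g u, v⟫ ^ 2 ≤ Fintype.card G * ‖u‖ ^ 2 * ‖v‖ ^ 2 := by
  have htrace : LinearMap.trace ℝ _ (frameOperator fun g : G => permIsometry g u) =
      Fintype.card G * ‖u‖ ^ 2 := by
    simp [trace_frameOperator]
  rw [← inner_frameOperator_apply_self, ← htrace]
  exact (isPositive_frameOperator _).mul_inner_apply_self_le
    (fun μ hμ => le_finrank_eigenspace_frameOperator_permIsometry hd hu hμ.ne') v

theorem mul_sum_card_smul_inter_sub_sq_le
    (hd : ∀ p : Submodule ℝ (Ω → ℝ), IsNontrivIrredComponent G p → d ≤ finrank ℝ p)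
    (S : Finset G) (A B : Finset Ω) :
    d * ∑ g ∈ S, ((#(g • A ∩ B) : ℝ) - #A * #B / Fintype.card Ω) ^ 2 ≤
      Fintype.card G * (#A - #A * #A / Fintype.card Ω) * (#B - #B * #B / Fintype.card Ω) := by
  have key := mul_sum_inner_permIsometry_sq_le hd
    (inner_centeredIndicator_indicatorVec_univ A) (centeredIndicator B)
  simp only [permIsometry_centeredIndicator, inner_centeredIndicator, ← real_inner_self_eq_norm_sq,
    inter_self, card_smul_finset] at key
  calc (d : ℝ) * ∑ g ∈ S, ((#(g • A ∩ B) : ℝ) - #A * #B / Fintype.card Ω) ^ 2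
      ≤ d * ∑ g : G, ((#(g • A ∩ B) : ℝ) - #A * #B / Fintype.card Ω) ^ 2 :=
        mul_le_mul_of_nonneg_left (sum_le_sum_of_subset_of_nonneg (subset_univ S)
          fun _ _ _ => sq_nonneg _) d.cast_nonneg
    _ ≤ _ := key
    _ = _ := by ring

end Mixing

theorem mul_lt_of_mixing_bound {n N D s a b : ℝ} (hn : 0 < n) (hN : 0 < N) (hD : 0 < D)
    (ha : 0 ≤ a) (hb : 0 ≤ b) (hbn : b ≤ n)
    (hmix : D * (s * (a * b / n) ^ 2) ≤ N * (a - a * a / n) * (b - b * b / n)) :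
    s * a * b < n ^ 2 * N / D := by
  rw [lt_div_iff₀ hD]
  rcases (mul_nonneg ha hb).eq_or_lt with hab | hab
  · rw [mul_assoc s, ← hab]
    simp only [mul_zero, zero_mul]
    positivity
  have hmix' : D * s * (a * b) * (a * b) ≤ N * (n - a) * (n - b) * (a * b) := by
    have e₁ : D * (s * (a * b / n) ^ 2) = D * s * (a * b) * (a * b) / n ^ 2 := by
      field_simp
    have e₂ : N * (a - a * a / n) * (b - b * b / n) = N * (n - a) * (n - b) * (a * b) / n ^ 2 := by
      field_simp
    rw [e₁, e₂] at hmix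
    exact (div_le_div_iff_of_pos_right (by positivity)).mp hmix
  have hcomp : (n - a) * (n - b) < n ^ 2 := by
    nlinarith [pos_of_mul_pos_left hab hb]
  nlinarith [le_of_mul_le_mul_right hmix' hab]

theorem quasirandom_action_mixing_general
    {G : Type*} [Group G] [Fintype G] {Ω : Type*} [Fintype Ω]
    [MulAction G Ω] [MulAction.IsPretransitive G Ω]
    (d : ℕ)
    (hd : IsLeast {k : ℕ | ∃ p : Submodule ℝ (Ω → ℝ),
      IsNontrivIrredComponent G p ∧ k = Module.finrank ℝ p} d)
    (S : Finset G) (Δ₁ Δ₂ : Finset Ω)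
    (h : ((S.card : ℝ) * (Δ₁.card : ℝ) * (Δ₂.card : ℝ)) ≥
      (Fintype.card Ω : ℝ) ^ 2 * (Fintype.card G : ℝ) / (d : ℝ)) :
    ∃ g ∈ S, ∃ ω₁ ∈ Δ₁, ∃ ω₂ ∈ Δ₂, g • ω₁ = ω₂ := by
  classical
  obtain ⟨p, hp, rfl⟩ := hd.1
  have : Nonempty Ω := hp.nonempty
  by_contra! hnone
  have hdisj : ∀ g ∈ S, g • Δ₁ ∩ Δ₂ = ∅ := fun g hg => by
    ext ω
    simp only [mem_inter, mem_smul_finset, notMem_empty, iff_false, not_and]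
    rintro ⟨ω₁, hω₁, rfl⟩ hω₂
    exact hnone g hg ω₁ hω₁ _ hω₂ rfl
  have hmix := mul_sum_card_smul_inter_sub_sq_le (fun q hq => hd.2 ⟨q, hq, rfl⟩) S Δ₁ Δ₂
  rw [sum_congr rfl fun g hg => by rw [hdisj g hg], sum_const, nsmul_eq_mul, card_empty,
    Nat.cast_zero, zero_sub, neg_sq] at hmix
  refine (mul_lt_of_mixing_bound (by exact_mod_cast Fintype.card_pos)
    (by exact_mod_cast Fintype.card_pos) (by exact_mod_cast hp.finrank_pos) (by positivity)
    (by positivity) (by exact_mod_cast card_le_univ Δ₂) hmix).not_ge h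

/-- Quasirandom mixing for group actions: if `|S||Δ₁||Δ₂| ≥ |Ω|²|G|/d_H` then some
`g ∈ S` maps some `ω₁ ∈ Δ₁` to some `ω₂ ∈ Δ₂`. -/
theorem quasirandom_action_mixing
    {G : Type*} [Group G] [Fintype G] {Ω : Type*} [Fintype Ω]
    [MulAction G Ω] [MulAction.IsPretransitive G Ω]
    (d : ℕ)
    (hd : IsLeast {k : ℕ | ∃ p : Submodule ℝ (Ω → ℝ),
      IsNontrivIrredComponent G p ∧ k = Module.finrank ℝ p} d)
    (S : Finset G) (Δ₁ Δ₂ : Finset Ω)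
    (hS : S.Nonempty) (hΔ₁ : Δ₁.Nonempty) (hΔ₂ : Δ₂.Nonempty)
    (h : ((S.card : ℝ) * (Δ₁.card : ℝ) * (Δ₂.card : ℝ)) ≥
      (Fintype.card Ω : ℝ) ^ 2 * (Fintype.card G : ℝ) / (d : ℝ)) :
    ∃ g ∈ S, ∃ ω₁ ∈ Δ₁, ∃ ω₂ ∈ Δ₂, g • ω₁ = ω₂ :=
  quasirandom_action_mixing_general d hd S Δ₁ Δ₂ h
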